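/- arXiv:2503.07345 — 2 statements merged into one kernel-verified Lean document; each statement's English description precedes it below -/
import Mathlib

section
/- Let F, G : ℝ → M₂(ℂ) be differentiable matrix-valued functions, define the matrix Wronskian 𝒲[F,G] = Fᵗ σ₃ G' - (F')ᵗ σ₃ G where σ₃ = diag(1,-1). Suppose 𝒲[F,F](r) = 0 and 𝒲[G,G](r) = 0 at some point r, and suppose D := 𝒲[F,G](r) is invertible. Then the 4×4 block matrix [[F(r), G(r)], [F'(r), G'(r)]] is invertible with inverse [[(Dᵗ)⁻¹, 0],[0, D⁻¹]] · [[0, -I],[I, 0]] · [[F(r)ᵗ, F'(r)ᵗ],[G(r)ᵗ, G'(r)ᵗ]] · [[0, σ₃],[-σ₃, 0]]. -/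
open Matrix

/-- The Pauli matrix `σ₃`. -/
def sigma3 : Matrix (Fin 2) (Fin 2) ℂ := !![1, 0; 0, -1]

/-- Inversion of the 4×4 block matrix `[[F, G],[F', G']]` when the self-Wronskians vanish
and the matrix Wronskian `D = 𝒲[F,G]` is invertible. -/
theorem stmt7 (F G : ℝ → Matrix (Fin 2) (Fin 2) ℂ) (r : ℝ)
    (F' G' : Matrix (Fin 2) (Fin 2) ℂ)
    (hF : ∀ i j, HasDerivAt (fun t => F t i j) (F' i j) r)
    (hG : ∀ i j, HasDerivAt (fun t => G t i j) (G' i j) r)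
    (hFF : (F r)ᵀ * sigma3 * F' - F'ᵀ * sigma3 * F r = 0)
    (hGG : (G r)ᵀ * sigma3 * G' - G'ᵀ * sigma3 * G r = 0)
    (hD : IsUnit ((F r)ᵀ * sigma3 * G' - F'ᵀ * sigma3 * G r).det) :
    Matrix.fromBlocks (F r) (G r) F' G' *
        (Matrix.fromBlocks (((F r)ᵀ * sigma3 * G' - F'ᵀ * sigma3 * G r)ᵀ)⁻¹ 0 0
            ((F r)ᵀ * sigma3 * G' - F'ᵀ * sigma3 * G r)⁻¹ *
          Matrix.fromBlocks 0 (-1) 1 0 *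
          Matrix.fromBlocks (F r)ᵀ F'ᵀ (G r)ᵀ G'ᵀ *
          Matrix.fromBlocks 0 sigma3 (-sigma3) 0) = 1 ∧
    (Matrix.fromBlocks (((F r)ᵀ * sigma3 * G' - F'ᵀ * sigma3 * G r)ᵀ)⁻¹ 0 0
            ((F r)ᵀ * sigma3 * G' - F'ᵀ * sigma3 * G r)⁻¹ *
          Matrix.fromBlocks 0 (-1) 1 0 *
          Matrix.fromBlocks (F r)ᵀ F'ᵀ (G r)ᵀ G'ᵀ *
          Matrix.fromBlocks 0 sigma3 (-sigma3) 0) *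
        Matrix.fromBlocks (F r) (G r) F' G' = 1 := by
  set A := F r with hA
  set B := G r with hB
  have hσ : sigma3ᵀ = sigma3 := by
    ext i j; fin_cases i <;> fin_cases j <;> simp [sigma3]
  set D := Aᵀ * sigma3 * G' - F'ᵀ * sigma3 * B with hDdef
  have hDT : Dᵀ = G'ᵀ * sigma3 * A - Bᵀ * sigma3 * F' := by
    simp [hDdef, transpose_sub, transpose_mul, hσ, Matrix.mul_assoc]
  have hDdet : IsUnit Dᵀ.det := by rwa [Matrix.det_transpose]
  have h1 : Dᵀ⁻¹ * Dᵀ = 1 := Matrix.nonsing_inv_mul _ hDdet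
  have h2 : D⁻¹ * D = 1 := Matrix.nonsing_inv_mul _ hD
  have key :
      (Matrix.fromBlocks (Dᵀ)⁻¹ 0 0 D⁻¹ *
          Matrix.fromBlocks 0 (-1) 1 0 *
          Matrix.fromBlocks Aᵀ F'ᵀ Bᵀ G'ᵀ *
          Matrix.fromBlocks 0 sigma3 (-sigma3) 0) *
        Matrix.fromBlocks A B F' G' = 1 := by
    simp only [Matrix.fromBlocks_multiply, Matrix.mul_zero, Matrix.zero_mul,
      Matrix.mul_one, Matrix.one_mul, zero_add, add_zero, Matrix.mul_neg,
      Matrix.neg_mul, neg_neg]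
    have e11 : Dᵀ⁻¹ * G'ᵀ * sigma3 * A + -(Dᵀ⁻¹ * Bᵀ * sigma3 * F') = 1 := by
      calc Dᵀ⁻¹ * G'ᵀ * sigma3 * A + -(Dᵀ⁻¹ * Bᵀ * sigma3 * F')
          = Dᵀ⁻¹ * (G'ᵀ * sigma3 * A - Bᵀ * sigma3 * F') := by noncomm_ring
        _ = Dᵀ⁻¹ * Dᵀ := by rw [← hDT]
        _ = 1 := h1
    have e12 : Dᵀ⁻¹ * G'ᵀ * sigma3 * B + -(Dᵀ⁻¹ * Bᵀ * sigma3 * G') = 0 := by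
      have z : G'ᵀ * sigma3 * B - Bᵀ * sigma3 * G' = 0 := by
        rw [sub_eq_zero]; exact (sub_eq_zero.mp hGG).symm
      calc Dᵀ⁻¹ * G'ᵀ * sigma3 * B + -(Dᵀ⁻¹ * Bᵀ * sigma3 * G')
          = Dᵀ⁻¹ * (G'ᵀ * sigma3 * B - Bᵀ * sigma3 * G') := by noncomm_ring
        _ = 0 := by rw [z, mul_zero]
    have e21 : -((D⁻¹ * F'ᵀ + -0) * sigma3 * A) + (D⁻¹ * Aᵀ + -0) * sigma3 * F' = 0 := by
      calc -((D⁻¹ * F'ᵀ + -0) * sigma3 * A) + (D⁻¹ * Aᵀ + -0) * sigma3 * F'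
          = D⁻¹ * (Aᵀ * sigma3 * F' - F'ᵀ * sigma3 * A) := by noncomm_ring
        _ = 0 := by rw [hFF, mul_zero]
    have e22 : -((D⁻¹ * F'ᵀ + -0) * sigma3 * B) + (D⁻¹ * Aᵀ + -0) * sigma3 * G' = 1 := by
      calc -((D⁻¹ * F'ᵀ + -0) * sigma3 * B) + (D⁻¹ * Aᵀ + -0) * sigma3 * G'
          = D⁻¹ * (Aᵀ * sigma3 * G' - F'ᵀ * sigma3 * B) := by noncomm_ring
        _ = D⁻¹ * D := by rw [← hDdef]
        _ = 1 := h2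
    rw [e11, e12, e21, e22, Matrix.fromBlocks_one]
  exact ⟨mul_eq_one_comm.mpr key, key⟩
end

section
/- Let S : (0,∞)² → M₂(ℂ) and F₁ : (0,∞) → M₂(ℂ) with det F₁(r) ≠ 0 for all r. Suppose S(r,s) = i F₁(r) M(s) σ₁ for some M : (0,∞) → M₂(ℂ), and that S satisfies the symmetry S(r,s)ᵗ = σ₁ S(s,r) σ₁ for all r, s > 0, where σ₁ = [[0,1],[1,0]]. Then the matrix C(r) := M(r) F₁(r)^{-t} is independent of r, symmetric (C = Cᵗ), and S(r,s) = i F₁(r) C F₁(s)ᵗ σ₁. -/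
open Matrix

/-- The Pauli matrix `σ₁`. -/
def sigma1 : Matrix (Fin 2) (Fin 2) ℂ := !![0, 1; 1, 0]

lemma sigma1_transpose : sigma1ᵀ = sigma1 := by
  ext i j; fin_cases i <;> fin_cases j <;> simp [sigma1]

lemma sigma1_sq : sigma1 * sigma1 = 1 := by
  ext i j; fin_cases i <;> fin_cases j <;>
    simp [Matrix.mul_apply, Fin.sum_univ_two, sigma1]

/-- If `S(r,s) = iF₁(r)M(s)σ₁` with `det F₁(r) ≠ 0`, and `S(r,s)ᵗ = σ₁S(s,r)σ₁` for all
`r, s > 0`, then `C(r) = M(r)F₁(r)^{-t}` is independent of `r`, symmetric, and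
`S(r,s) = iF₁(r)CF₁(s)ᵗσ₁`. -/
theorem stmt17 (S : ℝ → ℝ → Matrix (Fin 2) (Fin 2) ℂ)
    (F₁ M : ℝ → Matrix (Fin 2) (Fin 2) ℂ)
    (hdet : ∀ r : ℝ, 0 < r → (F₁ r).det ≠ 0)
    (hS : ∀ r : ℝ, 0 < r → ∀ s : ℝ, 0 < s → S r s = Complex.I • (F₁ r * M s * sigma1))
    (hsym : ∀ r : ℝ, 0 < r → ∀ s : ℝ, 0 < s → (S r s)ᵀ = sigma1 * S s r * sigma1) :
    ∃ C : Matrix (Fin 2) (Fin 2) ℂ, Cᵀ = C ∧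
      (∀ r : ℝ, 0 < r → M r * ((F₁ r)ᵀ)⁻¹ = C) ∧
      (∀ r : ℝ, 0 < r → ∀ s : ℝ, 0 < s →
        S r s = Complex.I • (F₁ r * C * (F₁ s)ᵀ * sigma1)) := by
  have hdet' : ∀ r : ℝ, 0 < r → IsUnit (F₁ r).det := fun r hr =>
    isUnit_iff_ne_zero.mpr (hdet r hr)
  have hdetT : ∀ r : ℝ, 0 < r → IsUnit ((F₁ r)ᵀ).det := fun r hr => by
    rw [Matrix.det_transpose]; exact hdet' r hr
  -- key equation: (M s)ᵀ * (F₁ r)ᵀ = F₁ s * M r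
  have key : ∀ r : ℝ, 0 < r → ∀ s : ℝ, 0 < s →
      (M s)ᵀ * (F₁ r)ᵀ = F₁ s * M r := by
    intro r hr s hs
    have h := hsym r hr s hs
    rw [hS r hr s hs, hS s hs r hr] at h
    rw [Matrix.transpose_smul, Matrix.transpose_mul, Matrix.transpose_mul,
      sigma1_transpose] at h
    rw [Matrix.mul_smul, Matrix.smul_mul] at h
    have h2 : sigma1 * ((M s)ᵀ * (F₁ r)ᵀ) = sigma1 * (F₁ s * M r) := by
      have := smul_right_injective (Matrix (Fin 2) (Fin 2) ℂ) Complex.I_ne_zero h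
      calc sigma1 * ((M s)ᵀ * (F₁ r)ᵀ)
          = sigma1 * (F₁ s * M r * sigma1) * sigma1 := this
        _ = sigma1 * (F₁ s * M r) * (sigma1 * sigma1) := by
            simp only [mul_assoc]
        _ = sigma1 * (F₁ s * M r) := by rw [sigma1_sq, mul_one]
    have := congrArg (fun X => sigma1 * X) h2
    simpa [← mul_assoc, sigma1_sq] using this
  -- the C r expression equals (F₁ s)⁻¹ * (M s)ᵀ for all s
  have key2 : ∀ r : ℝ, 0 < r → ∀ s : ℝ, 0 < s →
      M r * ((F₁ r)ᵀ)⁻¹ = (F₁ s)⁻¹ * (M s)ᵀ := by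
    intro r hr s hs
    have h := key r hr s hs
    have h1 : (M s)ᵀ = F₁ s * M r * ((F₁ r)ᵀ)⁻¹ := by
      rw [← h, Matrix.mul_nonsing_inv_cancel_right _ _ (hdetT r hr)]
    calc M r * ((F₁ r)ᵀ)⁻¹
        = (F₁ s)⁻¹ * (F₁ s * (M r * ((F₁ r)ᵀ)⁻¹)) := by
          rw [Matrix.nonsing_inv_mul_cancel_left _ _ (hdet' s hs)]
      _ = (F₁ s)⁻¹ * (M s)ᵀ := by rw [h1, mul_assoc]
  have hC : ∀ r : ℝ, 0 < r → M r * ((F₁ r)ᵀ)⁻¹ = M 1 * ((F₁ 1)ᵀ)⁻¹ := by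
    intro r hr
    rw [key2 r hr 1 one_pos, ← key2 1 one_pos 1 one_pos]
  refine ⟨M 1 * ((F₁ 1)ᵀ)⁻¹, ?_, hC, ?_⟩
  · rw [Matrix.transpose_mul, Matrix.transpose_nonsing_inv, Matrix.transpose_transpose,
      key2 1 one_pos 1 one_pos]
  · intro r hr s hs
    have hMs : M s = M 1 * ((F₁ 1)ᵀ)⁻¹ * (F₁ s)ᵀ := by
      rw [← hC s hs, Matrix.nonsing_inv_mul_cancel_right _ _ (hdetT s hs)]
    rw [hS r hr s hs, hMs]
    simp only [mul_assoc]
end
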